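/- Let e₁, e₂, e₃, e₄ be vectors in ℝⁿ, let M be an n × n real matrix, and define the score s(h, M, t) = ‖M h − t‖ (Euclidean norm), corresponding to translation models such as OTE that apply a relation-specific linear map to the head entity. If s(e₁, M, e₂) = 0, s(e₃, M, e₂) = 0, and s(e₃, M, e₄) = 0, then s(e₁, M, e₄) = 0. -/

import Mathlib

noncomputable def oteScore {n : ℕ} (M : Matrix (Fin n) (Fin n) ℝ)
    (h t : EuclideanSpace ℝ (Fin n)) : ℝ :=
  let Mh : EuclideanSpace ℝ (Fin n) := WithLp.toLp 2 (fun i => M.mulVec h i)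
  ‖Mh - t‖

theorem oteScore_eq_zero_iff {n : ℕ} (M : Matrix (Fin n) (Fin n) ℝ)
    (h t : EuclideanSpace ℝ (Fin n)) :
    oteScore M h t = 0 ↔ WithLp.toLp 2 (M.mulVec h) = t := by
  simp only [oteScore, norm_eq_zero, sub_eq_zero]

theorem z_paradox_linear_head {n : ℕ}
    (e₁ e₂ e₃ e₄ : EuclideanSpace ℝ (Fin n)) (M : Matrix (Fin n) (Fin n) ℝ)
    (h12 : oteScore M e₁ e₂ = 0) (h32 : oteScore M e₃ e₂ = 0)
    (h34 : oteScore M e₃ e₄ = 0) :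
    oteScore M e₁ e₄ = 0 := by
  rw [oteScore_eq_zero_iff] at h12 h32 h34 ⊢
  exact h12.trans (h32.symm.trans h34)
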